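/- Let 𝕜 be a commutative ring and let A be the quotient of the free associative 𝕜-algebra 𝕜⟨a, b, c⟩ by the two-sided ideal generated by the four elements ab, ba, ac − cb, bc − ca. Then the images in A of the words c^n (n ≥ 0), a^m c^n (m ≥ 1, n ≥ 0), and b^m c^n (m ≥ 1, n ≥ 0) form a basis of A as a 𝕜-module. -/

import Mathlib

noncomputable section

variable (𝕜 : Type*) [CommRing 𝕜]

/-- The generator `a` of the free algebra `𝕜⟨a,b,c⟩`. -/
def aGen : FreeAlgebra 𝕜 (Fin 3) := FreeAlgebra.ι 𝕜 0

/-- The generator `b` of the free algebra `𝕜⟨a,b,c⟩`. -/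
def bGen : FreeAlgebra 𝕜 (Fin 3) := FreeAlgebra.ι 𝕜 1

/-- The generator `c` of the free algebra `𝕜⟨a,b,c⟩`. -/
def cGen : FreeAlgebra 𝕜 (Fin 3) := FreeAlgebra.ι 𝕜 2

/-- The relations `ab = 0`, `ba = 0`, `ac = cb`, `bc = ca`: quotienting the free
algebra by the congruence they generate is the quotient by the two-sided ideal
generated by `ab`, `ba`, `ac - cb`, `bc - ca`. -/
def strandRel : FreeAlgebra 𝕜 (Fin 3) → FreeAlgebra 𝕜 (Fin 3) → Prop := fun x y =>
  (x = aGen 𝕜 * bGen 𝕜 ∧ y = 0) ∨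
  (x = bGen 𝕜 * aGen 𝕜 ∧ y = 0) ∨
  (x = aGen 𝕜 * cGen 𝕜 ∧ y = cGen 𝕜 * bGen 𝕜) ∨
  (x = bGen 𝕜 * cGen 𝕜 ∧ y = cGen 𝕜 * aGen 𝕜)

/-- The quotient algebra `A = 𝕜⟨a,b,c⟩/(ab, ba, ac - cb, bc - ca)`. -/
abbrev StrandAlg := RingQuot (strandRel 𝕜)

/-- The words `cⁿ` (`n ≥ 0`), `a^(m+1)·cⁿ` and `b^(m+1)·cⁿ` (`m, n ≥ 0`),
viewed in `A`. -/
def strandWord : ℕ ⊕ (ℕ × ℕ) ⊕ (ℕ × ℕ) → StrandAlg 𝕜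
  | Sum.inl n => RingQuot.mkAlgHom 𝕜 (strandRel 𝕜) (cGen 𝕜 ^ n)
  | Sum.inr (Sum.inl (m, n)) =>
      RingQuot.mkAlgHom 𝕜 (strandRel 𝕜) (aGen 𝕜 ^ (m + 1) * cGen 𝕜 ^ n)
  | Sum.inr (Sum.inr (m, n)) =>
      RingQuot.mkAlgHom 𝕜 (strandRel 𝕜) (bGen 𝕜 ^ (m + 1) * cGen 𝕜 ^ n)

/-!
Left multiplication by a generator sends each of the words `cⁿ`, `aᵐ⁺¹cⁿ`, `bᵐ⁺¹cⁿ` to another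
such word or to `0`, thanks to `ab = ba = 0` and `c aᵐ = bᵐ c`, `c bᵐ = aᵐ c`; since the words
contain `1`, they span `A`. For independence, let the generators act on the free module over the
words by the same rule: the relations hold for these operators, so `A` acts, and each word applied
to the basis vector of the empty word `1` gives its own basis vector.
-/

theorem Submodule.span_range_eq_top_of_mul_mem {R A ι : Type*} [CommSemiring R] [Semiring A]
    [Algebra R A] {s : Set A} (hs : Algebra.adjoin R s = ⊤) (w : ι → A)
    (h1 : (1 : A) ∈ Submodule.span R (Set.range w))
    (hmul : ∀ x ∈ s, ∀ i, x * w i ∈ Submodule.span R (Set.range w)) :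
    Submodule.span R (Set.range w) = ⊤ := by
  set M := Submodule.span R (Set.range w)
  have hgen : ∀ x ∈ s, ∀ m ∈ M, x * m ∈ M := fun x hx m hm => by
    induction hm using Submodule.span_induction with
    | mem _ hm => obtain ⟨i, rfl⟩ := hm; exact hmul x hx i
    | zero => simp
    | add m n _ _ hm hn => rw [mul_add]; exact add_mem hm hn
    | smul r m _ hm => rw [mul_smul_comm]; exact M.smul_mem r hm
  have hadjoin : ∀ x ∈ Algebra.adjoin R s, ∀ m ∈ M, x * m ∈ M := fun x hx => by
    induction hx using Algebra.adjoin_induction with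
    | mem x hx => exact hgen x hx
    | algebraMap r => exact fun m hm => by rw [← Algebra.smul_def]; exact M.smul_mem r hm
    | add x y _ _ hx hy => exact fun m hm => by rw [add_mul]; exact add_mem (hx m hm) (hy m hm)
    | mul x y _ _ hx hy => exact fun m hm => by rw [mul_assoc]; exact hx _ (hy m hm)
  refine eq_top_iff.2 fun x _ => ?_
  simpa using hadjoin x (hs ▸ Algebra.mem_top) 1 h1

namespace Finsupp

variable {R ι : Type*} [CommSemiring R]

def lmapDomainOption (f : ι → Option ι) : Module.End R (ι →₀ R) :=
  Finsupp.lsum R fun i => (f i).elim 0 fun j => Finsupp.lsingle j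

theorem lmapDomainOption_single (f : ι → Option ι) (i : ι) (r : R) :
    lmapDomainOption f (single i r) = (f i).elim 0 fun j => single j r := by
  cases h : f i <;> simp [lmapDomainOption, h]

end Finsupp

namespace StrandAlg

abbrev NormalWord := ℕ ⊕ (ℕ × ℕ) ⊕ (ℕ × ℕ)

/-- Left multiplication by `a`, `b`, `c` (the images of `FreeAlgebra.ι 𝕜 0, 1, 2`) on normal
words, with `none` standing for the product `0`. -/
def leftMulWord : Fin 3 → NormalWord → Option NormalWord
  | 0, .inl n => some (.inr (.inl (0, n)))
  | 0, .inr (.inl (m, n)) => some (.inr (.inl (m + 1, n)))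
  | 0, .inr (.inr _) => none
  | 1, .inl n => some (.inr (.inr (0, n)))
  | 1, .inr (.inl _) => none
  | 1, .inr (.inr (m, n)) => some (.inr (.inr (m + 1, n)))
  | 2, .inl n => some (.inl (n + 1))
  | 2, .inr (.inl (m, n)) => some (.inr (.inr (m, n + 1)))
  | 2, .inr (.inr (m, n)) => some (.inr (.inl (m, n + 1)))

def gen (g : Fin 3) : StrandAlg 𝕜 := RingQuot.mkAlgHom 𝕜 (strandRel 𝕜) (FreeAlgebra.ι 𝕜 g)

theorem adjoin_range_gen : Algebra.adjoin 𝕜 (Set.range (gen 𝕜)) = ⊤ := by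
  change Algebra.adjoin 𝕜 (Set.range (RingQuot.mkAlgHom 𝕜 (strandRel 𝕜) ∘ FreeAlgebra.ι 𝕜)) = ⊤
  rw [Set.range_comp, Algebra.adjoin_image, FreeAlgebra.adjoin_range_ι, Algebra.map_top,
    AlgHom.range_eq_top]
  exact RingQuot.mkAlgHom_surjective 𝕜 (strandRel 𝕜)

theorem gen_zero_mul_gen_one : gen 𝕜 0 * gen 𝕜 1 = 0 := by
  simpa [gen, aGen, bGen] using
    RingQuot.mkAlgHom_rel 𝕜 (s := strandRel 𝕜) (Or.inl ⟨rfl, rfl⟩)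

theorem gen_one_mul_gen_zero : gen 𝕜 1 * gen 𝕜 0 = 0 := by
  simpa [gen, aGen, bGen] using
    RingQuot.mkAlgHom_rel 𝕜 (s := strandRel 𝕜) (Or.inr (Or.inl ⟨rfl, rfl⟩))

theorem semiconjBy_gen_two_one_zero : SemiconjBy (gen 𝕜 2) (gen 𝕜 1) (gen 𝕜 0) := by
  simpa [SemiconjBy, gen, aGen, bGen, cGen] using
    (RingQuot.mkAlgHom_rel 𝕜 (s := strandRel 𝕜) (Or.inr (Or.inr (Or.inl ⟨rfl, rfl⟩)))).symm

theorem semiconjBy_gen_two_zero_one : SemiconjBy (gen 𝕜 2) (gen 𝕜 0) (gen 𝕜 1) := by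
  simpa [SemiconjBy, gen, aGen, bGen, cGen] using
    (RingQuot.mkAlgHom_rel 𝕜 (s := strandRel 𝕜) (Or.inr (Or.inr (Or.inr ⟨rfl, rfl⟩)))).symm

theorem strandWord_inl (n : ℕ) : strandWord 𝕜 (.inl n) = gen 𝕜 2 ^ n := by
  simp [strandWord, gen, cGen]

theorem strandWord_inr_inl (m n : ℕ) :
    strandWord 𝕜 (.inr (.inl (m, n))) = gen 𝕜 0 ^ (m + 1) * gen 𝕜 2 ^ n := by
  simp [strandWord, gen, aGen, cGen]

theorem strandWord_inr_inr (m n : ℕ) :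
    strandWord 𝕜 (.inr (.inr (m, n))) = gen 𝕜 1 ^ (m + 1) * gen 𝕜 2 ^ n := by
  simp [strandWord, gen, bGen, cGen]

theorem gen_zero_mul_gen_one_pow_succ (m : ℕ) : gen 𝕜 0 * gen 𝕜 1 ^ (m + 1) = 0 := by
  rw [pow_succ', ← mul_assoc, gen_zero_mul_gen_one, zero_mul]

theorem gen_one_mul_gen_zero_pow_succ (m : ℕ) : gen 𝕜 1 * gen 𝕜 0 ^ (m + 1) = 0 := by
  rw [pow_succ', ← mul_assoc, gen_one_mul_gen_zero, zero_mul]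

theorem gen_mul_strandWord (g : Fin 3) (w : NormalWord) :
    gen 𝕜 g * strandWord 𝕜 w = (leftMulWord g w).elim 0 (strandWord 𝕜) := by
  fin_cases g <;> rcases w with n | ⟨m, n⟩ | ⟨m, n⟩ <;>
    simp only [Fin.zero_eta, Fin.mk_one, Fin.reduceFinMk, leftMulWord, Option.elim,
      strandWord_inl, strandWord_inr_inl, strandWord_inr_inr, ← mul_assoc, ← pow_succ',
      zero_add, pow_one, gen_zero_mul_gen_one_pow_succ, gen_one_mul_gen_zero_pow_succ, zero_mul,
      ((semiconjBy_gen_two_zero_one 𝕜).pow_right _).eq,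
      ((semiconjBy_gen_two_one_zero 𝕜).pow_right _).eq]
  all_goals rw [mul_assoc, ← pow_succ']

theorem span_range_strandWord : Submodule.span 𝕜 (Set.range (strandWord 𝕜)) = ⊤ := by
  refine Submodule.span_range_eq_top_of_mul_mem (adjoin_range_gen 𝕜) _ ?_ ?_
  · exact Submodule.subset_span ⟨.inl 0, by rw [strandWord_inl, pow_zero]⟩
  · rintro _ ⟨g, rfl⟩ w
    rw [gen_mul_strandWord]
    cases leftMulWord g w with
    | none => exact zero_mem _
    | some w' => exact Submodule.subset_span ⟨w', rfl⟩

def freeNormalFormRep : FreeAlgebra 𝕜 (Fin 3) →ₐ[𝕜] Module.End 𝕜 (NormalWord →₀ 𝕜) :=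
  FreeAlgebra.lift 𝕜 fun g => Finsupp.lmapDomainOption (leftMulWord g)

theorem freeNormalFormRep_eq_of_strandRel {x y : FreeAlgebra 𝕜 (Fin 3)} (h : strandRel 𝕜 x y) :
    freeNormalFormRep 𝕜 x = freeNormalFormRep 𝕜 y := by
  rcases h with ⟨rfl, rfl⟩ | ⟨rfl, rfl⟩ | ⟨rfl, rfl⟩ | ⟨rfl, rfl⟩ <;>
    refine Finsupp.lhom_ext fun w r => ?_ <;>
    rcases w with n | ⟨m, n⟩ | ⟨m, n⟩ <;>
    simp [freeNormalFormRep, aGen, bGen, cGen, Finsupp.lmapDomainOption_single, leftMulWord]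

def normalFormRep : StrandAlg 𝕜 →ₐ[𝕜] Module.End 𝕜 (NormalWord →₀ 𝕜) :=
  RingQuot.liftAlgHom 𝕜 ⟨freeNormalFormRep 𝕜, fun _ _ => freeNormalFormRep_eq_of_strandRel 𝕜⟩

def toNormalForm : StrandAlg 𝕜 →ₗ[𝕜] NormalWord →₀ 𝕜 :=
  LinearMap.applyₗ (Finsupp.single (.inl 0) 1) ∘ₗ (normalFormRep 𝕜).toLinearMap

theorem toNormalForm_gen_mul (g : Fin 3) (x : StrandAlg 𝕜) :
    toNormalForm 𝕜 (gen 𝕜 g * x) =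
      Finsupp.lmapDomainOption (leftMulWord g) (toNormalForm 𝕜 x) := by
  simp [toNormalForm, normalFormRep, freeNormalFormRep, gen, RingQuot.liftAlgHom_mkAlgHom_apply]

theorem toNormalForm_strandWord (w : NormalWord) :
    toNormalForm 𝕜 (strandWord 𝕜 w) = Finsupp.single w 1 := by
  have step : ∀ g v v', leftMulWord g v = some v' →
      toNormalForm 𝕜 (strandWord 𝕜 v) = Finsupp.single v 1 →
      toNormalForm 𝕜 (strandWord 𝕜 v') = Finsupp.single v' 1 := fun g v v' h ih => by
    have hv' := gen_mul_strandWord 𝕜 g v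
    rw [h, Option.elim_some] at hv'
    rw [← hv', toNormalForm_gen_mul, ih, Finsupp.lmapDomainOption_single, h, Option.elim_some]
  have h_inl : ∀ n, toNormalForm 𝕜 (strandWord 𝕜 (.inl n)) = Finsupp.single (.inl n) 1 := by
    intro n
    induction n with
    | zero => simp [strandWord_inl, toNormalForm]
    | succ n ih => exact step 2 _ _ rfl ih
  rcases w with n | ⟨m, n⟩ | ⟨m, n⟩
  · exact h_inl n
  · induction m with
    | zero => exact step 0 _ _ rfl (h_inl n)
    | succ m ih => exact step 0 _ _ rfl ih
  · induction m with
    | zero => exact step 1 _ _ rfl (h_inl n)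
    | succ m ih => exact step 1 _ _ rfl ih

theorem linearIndependent_strandWord : LinearIndependent 𝕜 (strandWord 𝕜) := by
  refine LinearIndependent.of_comp (toNormalForm 𝕜) ?_
  rw [show toNormalForm 𝕜 ∘ strandWord 𝕜 = fun w => Finsupp.single w 1 from
    funext (toNormalForm_strandWord 𝕜)]
  exact Finsupp.basisSingleOne.linearIndependent

end StrandAlg

theorem stmt_14 :
    ∃ B : Module.Basis (ℕ ⊕ (ℕ × ℕ) ⊕ (ℕ × ℕ)) 𝕜 (StrandAlg 𝕜),
      ∀ idx, B idx = strandWord 𝕜 idx :=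
  ⟨.mk (StrandAlg.linearIndependent_strandWord 𝕜) (StrandAlg.span_range_strandWord 𝕜).ge,
    Module.Basis.mk_apply _ _⟩

end
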